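/- Let Z₁,…,Zₙ be (not necessarily independent) random variables over finite alphabet Z such that H(Z_i | Z₁=z₁,…,Z_{i−1}=z_{i−1}) ≥ h for all i and all histories z₁,…,z_{i−1}. Then for any 0 < λ < 1/2, the smooth min-entropy satisfies H_min^ε(Z₁…Zₙ) ≥ (h − 2λ)n, with ε = exp(−λ²n / (32·(log₂(|Z|/λ))²)). -/

import Mathlib

/-!
Truncate the surprisal of each symbol at `M = log₂(|Z|/λ)`. The truncated surprisal
`X_j ∈ [0, M]` has conditional mean at least `h - λ / ln 2`, and `∑ X_j ≤ -log₂ P(w)` by the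
chain rule. Bounding each conditional moment generating function by
`exp(-s(h - λ / ln 2) + s²M²/2)` and chaining backwards along prefixes bounds
`E[exp(-s ∑ X_j)]`; Markov's inequality with `s = λ / (2M²)` then shows that the strings with
`P(w) > 2^{-(h-2λ)n}` carry mass at most `ε`, and deleting them gives the smoothed
distribution.
-/

open scoped Classical

variable {Z : Type*} [Fintype Z] [Nonempty Z]

/-- Generalized trace distance. -/
noncomputable def GTD {W : Type*} [Fintype W] (P Q : W → ℝ) : ℝ :=
  (1/2) * ∑ w, |P w - Q w| + (1/2) * |∑ w, (P w - Q w)|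

/-- Subnormalized distribution. -/
def IsSubDist {W : Type*} [Fintype W] (P : W → ℝ) : Prop := (∀ w, 0 ≤ P w) ∧ ∑ w, P w ≤ 1

/-- Probability that the first `i` coordinates agree with `z`. -/
noncomputable def prefProb {n : ℕ} (P : (Fin n → Z) → ℝ) (i : ℕ) (z : Fin n → Z) : ℝ :=
  ∑ w, if ∀ j : Fin n, (j : ℕ) < i → w j = z j then P w else 0

/-- Conditional probability `Pr[Z_i = a | Z_1 … Z_{i-1} = z_1 … z_{i-1}]`. -/
noncomputable def condProb {n : ℕ} (P : (Fin n → Z) → ℝ) (i : Fin n) (z : Fin n → Z)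
    (a : Z) : ℝ :=
  prefProb P (i + 1) (Function.update z i a) / prefProb P i z

/-- Conditional Shannon entropy (bits) of `Z_i` given the history `z`. -/
noncomputable def condEnt {n : ℕ} (P : (Fin n → Z) → ℝ) (i : Fin n) (z : Fin n → Z) : ℝ :=
  -∑ a : Z, condProb P i z a * Real.logb 2 (condProb P i z a)

open Real Finset Function

section MomentBound

lemma exp_neg_le_one_sub_add_sq_div_two {x : ℝ} (hx : 0 ≤ x) :
    exp (-x) ≤ 1 - x + x ^ 2 / 2 := by
  have hq := quadratic_le_exp_of_nonneg hx
  rw [exp_neg, inv_le_iff_one_le_mul₀' (exp_pos x)]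
  nlinarith [sq_nonneg x, sq_nonneg (x ^ 2), sq_nonneg (x - 1)]

variable {α : Type*} [Fintype α] {q : α → ℝ}

lemma sum_mul_exp_neg_mul_le {T : α → ℝ} {s M : ℝ} (hq0 : ∀ a, 0 ≤ q a) (hq1 : ∑ a, q a = 1)
    (hT0 : ∀ a, 0 ≤ T a) (hTM : ∀ a, T a ≤ M) (hs : 0 ≤ s) :
    ∑ a, q a * exp (-(s * T a)) ≤ exp (-(s * ∑ a, q a * T a) + s ^ 2 * M ^ 2 / 2) := by
  have hpt : ∀ a, exp (-(s * T a)) ≤ 1 - s * T a + s ^ 2 * M ^ 2 / 2 := fun a => by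
    have hsq : (s * T a) ^ 2 ≤ s ^ 2 * M ^ 2 := by
      rw [mul_pow]; gcongr
      · exact hT0 a
      · exact hTM a
    linarith [exp_neg_le_one_sub_add_sq_div_two (mul_nonneg hs (hT0 a))]
  calc ∑ a, q a * exp (-(s * T a)) ≤ ∑ a, q a * (1 - s * T a + s ^ 2 * M ^ 2 / 2) :=
        sum_le_sum fun a _ => mul_le_mul_of_nonneg_left (hpt a) (hq0 a)
    _ = -(s * ∑ a, q a * T a) + s ^ 2 * M ^ 2 / 2 + 1 := by
        have hexpand : ∀ a, q a * (1 - s * T a + s ^ 2 * M ^ 2 / 2) =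
            q a * (1 + s ^ 2 * M ^ 2 / 2) - s * (q a * T a) := fun a => by ring
        rw [sum_congr rfl fun a _ => hexpand a, sum_sub_distrib, ← sum_mul, ← mul_sum, hq1]
        ring
    _ ≤ exp (-(s * ∑ a, q a * T a) + s ^ 2 * M ^ 2 / 2) := add_one_le_exp _

end MomentBound

section TruncatedSurprisal

noncomputable def truncSurprisal (M p : ℝ) : ℝ := min (-logb 2 p) M

lemma truncSurprisal_nonneg {M p : ℝ} (hM : 0 ≤ M) (hp0 : 0 ≤ p) (hp1 : p ≤ 1) :
    0 ≤ truncSurprisal M p :=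
  le_min (neg_nonneg.2 (logb_nonpos one_lt_two hp0 hp1)) hM

lemma truncSurprisal_le (M p : ℝ) : truncSurprisal M p ≤ M := min_le_right _ _

lemma truncSurprisal_le_neg_logb (M p : ℝ) : truncSurprisal M p ≤ -logb 2 p := min_le_left _ _

lemma mul_neg_logb_le_mul_truncSurprisal_add {p : ℝ} (hp : 0 ≤ p) (M : ℝ) :
    p * -logb 2 p ≤ p * truncSurprisal M p + 2 ^ (-M) / log 2 := by
  have hloss : 0 < (2 : ℝ) ^ (-M) / log 2 := by positivity
  rcases le_total (-logb 2 p) M with hle | hle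
  · rw [truncSurprisal, min_eq_left hle]; linarith
  rw [truncSurprisal, min_eq_right hle]
  rcases hp.eq_or_lt with rfl | hpos
  · simpa using hloss.le
  -- `p log₂(c / p) ≤ c / ln 2` from `log x ≤ x`
  have hexcess : -logb 2 p - M = log (2 ^ (-M) / p) / log 2 := by
    rw [log_div (by positivity) hpos.ne', log_rpow two_pos, logb]
    field_simp
    ring
  have : p * (-logb 2 p - M) ≤ 2 ^ (-M) / log 2 :=
    calc p * (-logb 2 p - M) ≤ p * ((2 ^ (-M) / p) / log 2) := by
          rw [hexcess]; gcongr; exact log_le_self (by positivity)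
      _ = 2 ^ (-M) / log 2 := by field_simp
  linarith

variable {α : Type*} [Fintype α] {q : α → ℝ}

lemma neg_sum_mul_logb_le_sum_mul_truncSurprisal_add (hq0 : ∀ a, 0 ≤ q a) (M : ℝ) :
    -∑ a, q a * logb 2 (q a) ≤
      ∑ a, q a * truncSurprisal M (q a) + Fintype.card α * 2 ^ (-M) / log 2 := by
  have := sum_le_sum fun a (_ : a ∈ univ) => mul_neg_logb_le_mul_truncSurprisal_add (hq0 a) M
  simp only [sum_add_distrib, sum_const, card_univ, nsmul_eq_mul, mul_neg, sum_neg_distrib]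
    at this
  rwa [mul_div_assoc]

lemma sum_mul_exp_neg_mul_truncSurprisal_le (hq0 : ∀ a, 0 ≤ q a) (hq1 : ∑ a, q a = 1)
    {s M : ℝ} (hs : 0 ≤ s) (hM : 0 ≤ M) :
    ∑ a, q a * exp (-(s * truncSurprisal M (q a))) ≤
      exp (-(s * (-∑ a, q a * logb 2 (q a) - Fintype.card α * 2 ^ (-M) / log 2)) +
        s ^ 2 * M ^ 2 / 2) := by
  have hq_le : ∀ a, q a ≤ 1 := fun a => hq1 ▸ single_le_sum (fun b _ => hq0 b) (mem_univ a)
  refine (sum_mul_exp_neg_mul_le hq0 hq1 (fun a => truncSurprisal_nonneg hM (hq0 a) (hq_le a))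
    (fun a => truncSurprisal_le M (q a)) hs).trans (exp_le_exp.2 ?_)
  have := neg_sum_mul_logb_le_sum_mul_truncSurprisal_add hq0 M
  nlinarith

end TruncatedSurprisal

section Smoothing

variable {W : Type*} {P : W → ℝ}

lemma sum_filter_lt_le_exp_mul_sum [Fintype W] (hP : ∀ w, 0 ≤ P w) {X : W → ℝ} {θ s t : ℝ}
    (hs : 0 ≤ s) (hX : ∀ w, θ < P w → X w ≤ t) :
    ∑ w ∈ univ.filter (fun w => θ < P w), P w ≤ exp (s * t) * ∑ w, P w * exp (-(s * X w)) := by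
  rw [sum_filter, mul_sum]
  refine sum_le_sum fun w _ => ?_
  split_ifs with hw
  · have : 0 ≤ s * t + -(s * X w) := by nlinarith [hX w hw]
    calc P w ≤ P w * exp (s * t + -(s * X w)) :=
          le_mul_of_one_le_right (hP w) (one_le_exp this)
      _ = exp (s * t) * (P w * exp (-(s * X w))) := by rw [exp_add]; ring
  · exact mul_nonneg (exp_pos _).le (mul_nonneg (hP w) (exp_pos _).le)

noncomputable def cutoff (P : W → ℝ) (θ : ℝ) (w : W) : ℝ := if P w ≤ θ then P w else 0

lemma isSubDist_cutoff [Fintype W] (hP : ∀ w, 0 ≤ P w) (hPsum : ∑ w, P w ≤ 1) (θ : ℝ) :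
    IsSubDist (cutoff P θ) := by
  have hle : ∀ w, cutoff P θ w ≤ P w := fun w => by unfold cutoff; split_ifs <;> simp [hP w]
  refine ⟨fun w => ?_, (sum_le_sum fun w _ => hle w).trans hPsum⟩
  unfold cutoff; split_ifs <;> simp [hP w]

lemma cutoff_le {θ : ℝ} (hθ : 0 ≤ θ) (w : W) : cutoff P θ w ≤ θ := by
  unfold cutoff; split_ifs with hw <;> simp [hw, hθ]

lemma GTD_cutoff [Fintype W] (hP : ∀ w, 0 ≤ P w) (θ : ℝ) :
    GTD (cutoff P θ) P = ∑ w ∈ univ.filter (fun w => θ < P w), P w := by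
  have hdiff : ∀ w, cutoff P θ w - P w = -if θ < P w then P w else 0 := fun w => by
    unfold cutoff; split_ifs <;> linarith
  have hheavy_nonneg : ∀ w, 0 ≤ if θ < P w then P w else 0 := fun w => ite_nonneg (hP w) le_rfl
  simp only [GTD, hdiff, abs_neg, sum_neg_distrib]
  rw [sum_congr rfl fun w _ => abs_of_nonneg (hheavy_nonneg w),
    abs_of_nonneg (sum_nonneg fun w _ => hheavy_nonneg w), ← sum_filter]
  ring

end Smoothing

section Prefix

variable {α : Type*} {n : ℕ}

lemma agree_succ_update_iff {w z : Fin n → α} {i : Fin n} {a : α} :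
    (∀ j : Fin n, (j : ℕ) < i + 1 → w j = update z i a j) ↔
      (∀ j : Fin n, (j : ℕ) < i → w j = z j) ∧ w i = a := by
  constructor
  · intro h
    refine ⟨fun j hj => ?_, by simpa using h i (by omega)⟩
    simpa [update_of_ne (ne_of_lt (show j < i from hj))] using h j (by omega)
  · rintro ⟨h, rfl⟩ j hj
    rcases eq_or_ne j i with rfl | hne
    · simp
    · rw [update_of_ne hne]
      exact h j (lt_of_le_of_ne (Nat.lt_succ_iff.1 hj) (Fin.val_ne_of_ne hne))

variable [Fintype α]

lemma prefProb_nonneg {F : (Fin n → α) → ℝ} (hF : ∀ w, 0 ≤ F w) (i : ℕ) (z : Fin n → α) :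
    0 ≤ prefProb F i z :=
  sum_nonneg fun w _ => ite_nonneg (hF w) le_rfl

lemma prefProb_zero (F : (Fin n → α) → ℝ) (z : Fin n → α) : prefProb F 0 z = ∑ w, F w := by
  simp [prefProb]

lemma prefProb_self (F : (Fin n → α) → ℝ) (z : Fin n → α) : prefProb F n z = F z := by
  have hagree : ∀ w : Fin n → α, (∀ j : Fin n, (j : ℕ) < n → w j = z j) ↔ z = w :=
    fun w => ⟨fun h => (funext fun j => h j j.isLt).symm, fun h j _ => h ▸ rfl⟩
  simp only [prefProb, hagree, sum_ite_eq, mem_univ, if_true]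

lemma le_prefProb {F : (Fin n → α) → ℝ} (hF : ∀ w, 0 ≤ F w) (i : ℕ) (z : Fin n → α) :
    F z ≤ prefProb F i z := by
  unfold prefProb
  simpa using single_le_sum (fun w _ => ite_nonneg (hF w) le_rfl) (mem_univ z)
    (f := fun w => if ∀ j : Fin n, (j : ℕ) < i → w j = z j then F w else 0)

lemma prefProb_congr (F : (Fin n → α) → ℝ) {i : ℕ} {z₁ z₂ : Fin n → α}
    (hz : ∀ j : Fin n, (j : ℕ) < i → z₁ j = z₂ j) : prefProb F i z₁ = prefProb F i z₂ := by
  refine sum_congr rfl fun w _ => if_congr ?_ rfl rfl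
  exact forall_congr' fun j => imp_congr_right fun hj => by rw [hz j hj]

lemma prefProb_congr_fun {F G : (Fin n → α) → ℝ} {i : ℕ} {z : Fin n → α}
    (h : ∀ w, (∀ j : Fin n, (j : ℕ) < i → w j = z j) → F w = G w) :
    prefProb F i z = prefProb G i z :=
  sum_congr rfl fun w _ => by split_ifs with hw; exacts [h w hw, rfl]

lemma prefProb_const_mul (c : ℝ) (F : (Fin n → α) → ℝ) (i : ℕ) (z : Fin n → α) :
    prefProb (fun w => c * F w) i z = c * prefProb F i z := by
  simp only [prefProb, mul_sum, mul_ite, mul_zero]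

lemma prefProb_eq_sum_update (F : (Fin n → α) → ℝ) (i : Fin n) (z : Fin n → α) :
    prefProb F i z = ∑ a, prefProb F (i + 1) (update z i a) := by
  simp only [prefProb, agree_succ_update_iff, ite_and]
  rw [sum_comm]
  refine sum_congr rfl fun w _ => ?_
  split_ifs <;> simp

variable {P : (Fin n → α) → ℝ}

lemma condProb_nonneg (hP : ∀ w, 0 ≤ P w) (i : Fin n) (z : Fin n → α) (a : α) :
    0 ≤ condProb P i z a :=
  div_nonneg (prefProb_nonneg hP _ _) (prefProb_nonneg hP _ _)

lemma sum_condProb {i : Fin n} {z : Fin n → α} (hz : 0 < prefProb P i z) :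
    ∑ a, condProb P i z a = 1 := by
  simp only [condProb, ← sum_div, ← prefProb_eq_sum_update, div_self hz.ne']

lemma condProb_mul_prefProb (hP : ∀ w, 0 ≤ P w) (i : Fin n) (z : Fin n → α) (a : α) :
    condProb P i z a * prefProb P i z = prefProb P (i + 1) (update z i a) := by
  rcases (prefProb_nonneg hP i z).eq_or_lt with hzero | hpos
  · have hle : prefProb P (i + 1) (update z i a) ≤ prefProb P i z := by
      rw [prefProb_eq_sum_update P i z]
      exact single_le_sum (fun b _ => prefProb_nonneg hP _ _) (mem_univ a)
    rw [← hzero, mul_zero]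
    exact (le_antisymm (hzero ▸ hle) (prefProb_nonneg hP _ _)).symm
  · exact div_mul_cancel₀ _ hpos.ne'

lemma condProb_congr {i : Fin n} {z₁ z₂ : Fin n → α}
    (hz : ∀ j : Fin n, (j : ℕ) < i → z₁ j = z₂ j) (a : α) :
    condProb P i z₁ a = condProb P i z₂ a := by
  rw [condProb, condProb, prefProb_congr P hz, prefProb_congr P]
  refine agree_succ_update_iff.2 ⟨fun j hj => ?_, update_self ..⟩
  rw [update_of_ne (ne_of_lt (show j < i from hj))]
  exact hz j hj

lemma sum_neg_logb_condProb (hP : ∀ w, 0 ≤ P w) (hPsum : ∑ w, P w = 1) {w : Fin n → α}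
    (hw : 0 < P w) : ∑ j, -logb 2 (condProb P j w (w j)) = -logb 2 (P w) := by
  have hpos : ∀ i, prefProb P i w ≠ 0 := fun i => (hw.trans_le (le_prefProb hP i w)).ne'
  have hlog : ∀ j : Fin n, logb 2 (condProb P j w (w j)) =
      logb 2 (prefProb P (j + 1) w) - logb 2 (prefProb P j w) := fun j => by
    rw [condProb, update_eq_self, logb_div (hpos _) (hpos _)]
  rw [sum_neg_distrib, sum_congr rfl fun j _ => hlog j,
    Fin.sum_univ_eq_sum_range (fun i => logb 2 (prefProb P (i + 1) w) - logb 2 (prefProb P i w)),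
    sum_range_sub (fun i => logb 2 (prefProb P i w)), prefProb_self, prefProb_zero, hPsum,
    logb_one, sub_zero]

lemma sum_condProb_mul_exp_neg_mul_truncSurprisal_le (hP : ∀ w, 0 ≤ P w) {i : Fin n}
    {z : Fin n → α} (hz : 0 < prefProb P i z) {s M : ℝ} (hs : 0 ≤ s) (hM : 0 ≤ M) :
    ∑ a, condProb P i z a * exp (-(s * truncSurprisal M (condProb P i z a))) ≤
      exp (-(s * (condEnt P i z - Fintype.card α * 2 ^ (-M) / log 2)) + s ^ 2 * M ^ 2 / 2) :=
  sum_mul_exp_neg_mul_truncSurprisal_le (condProb_nonneg hP i z) (sum_condProb hz) hs hM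

lemma sum_truncSurprisal_condProb_le (hP : ∀ w, 0 ≤ P w) (hPsum : ∑ w, P w = 1)
    {w : Fin n → α} (hw : 0 < P w) (M : ℝ) :
    ∑ j, truncSurprisal M (condProb P j w (w j)) ≤ -logb 2 (P w) :=
  sum_neg_logb_condProb hP hPsum hw ▸ sum_le_sum fun _ _ => truncSurprisal_le_neg_logb M _

end Prefix

section Chaining

variable {α : Type*} [Fintype α] {n : ℕ} {P : (Fin n → α) → ℝ} {φ : ℝ → ℝ}

noncomputable def tailProd (P : (Fin n → α) → ℝ) (φ : ℝ → ℝ) (i : ℕ) (w : Fin n → α) : ℝ :=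
  ∏ j ∈ univ.filter (fun j : Fin n => i ≤ (j : ℕ)), φ (condProb P j w (w j))

lemma tailProd_of_le {i : ℕ} (hi : n ≤ i) (w : Fin n → α) : tailProd P φ i w = 1 :=
  prod_eq_one fun j hj => absurd (mem_filter.1 hj).2 (by omega)

lemma tailProd_zero (w : Fin n → α) : tailProd P φ 0 w = ∏ j, φ (condProb P j w (w j)) := by
  simp [tailProd]

lemma tailProd_succ (i : Fin n) (w : Fin n → α) :
    tailProd P φ i w = φ (condProb P i w (w i)) * tailProd P φ (i + 1) w := by
  have hsplit : univ.filter (fun j : Fin n => (i : ℕ) ≤ j) =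
      insert i (univ.filter (fun j : Fin n => (i : ℕ) + 1 ≤ j)) := by
    ext j; simp [Fin.ext_iff]; omega
  rw [tailProd, hsplit, prod_insert (by simp)]
  rfl

lemma prefProb_mul_tailProd_le (hP : ∀ w, 0 ≤ P w) (hφ : ∀ x, 0 ≤ φ x) {K : ℝ} (hK : 0 ≤ K)
    (hstep : ∀ (i : Fin n) z, 0 < prefProb P i z →
      ∑ a, condProb P i z a * φ (condProb P i z a) ≤ K)
    {d i : ℕ} (hid : i + d = n) (z : Fin n → α) :
    prefProb (fun w => P w * tailProd P φ i w) i z ≤ prefProb P i z * K ^ d := by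
  induction d generalizing i z with
  | zero => simp [tailProd_of_le (show n ≤ i by omega)]
  | succ d ih =>
    obtain ⟨i, rfl⟩ : ∃ i' : Fin n, (i' : ℕ) = i := ⟨⟨i, by omega⟩, rfl⟩
    have hcylinder : ∀ a, prefProb (fun w => P w * tailProd P φ i w) (i + 1) (update z i a) =
        φ (condProb P i z a) *
          prefProb (fun w => P w * tailProd P φ (i + 1) w) (i + 1) (update z i a) := fun a => by
      rw [← prefProb_const_mul]
      refine prefProb_congr_fun fun w hw => ?_
      obtain ⟨hbelow, rfl⟩ := agree_succ_update_iff.1 hw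
      rw [tailProd_succ, condProb_congr hbelow]
      ring
    calc prefProb (fun w => P w * tailProd P φ i w) i z
        = ∑ a, φ (condProb P i z a) *
            prefProb (fun w => P w * tailProd P φ (i + 1) w) (i + 1) (update z i a) := by
          rw [prefProb_eq_sum_update]
          exact sum_congr rfl fun a _ => hcylinder a
      _ ≤ ∑ a, φ (condProb P i z a) * (prefProb P (i + 1) (update z i a) * K ^ d) :=
          sum_le_sum fun a _ => mul_le_mul_of_nonneg_left (ih (by omega) _) (hφ _)
      _ = (∑ a, condProb P i z a * φ (condProb P i z a)) * (prefProb P i z * K ^ d) := by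
          rw [sum_mul]
          refine sum_congr rfl fun a _ => ?_
          rw [← condProb_mul_prefProb hP]
          ring
      _ ≤ K * (prefProb P i z * K ^ d) := by
          rcases (prefProb_nonneg hP i z).eq_or_lt with hzero | hpos
          · simp [← hzero]
          · exact mul_le_mul_of_nonneg_right (hstep i z hpos)
              (mul_nonneg hpos.le (pow_nonneg hK d))
      _ = prefProb P i z * K ^ (d + 1) := by ring

lemma sum_mul_prod_le_pow [Nonempty α] (hP : ∀ w, 0 ≤ P w) (hPsum : ∑ w, P w = 1)
    (hφ : ∀ x, 0 ≤ φ x) {K : ℝ} (hK : 0 ≤ K)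
    (hstep : ∀ (i : Fin n) z, 0 < prefProb P i z →
      ∑ a, condProb P i z a * φ (condProb P i z a) ≤ K) :
    ∑ w, P w * ∏ j, φ (condProb P j w (w j)) ≤ K ^ n := by
  simpa [prefProb_zero, tailProd_zero, hPsum] using
    prefProb_mul_tailProd_le hP hφ hK hstep (zero_add n) (Classical.arbitrary (Fin n → α))

lemma sum_filter_lt_le_exp_mul_pow [Nonempty α] (hP : ∀ w, 0 ≤ P w) (hPsum : ∑ w, P w = 1)
    {M s K : ℝ} (hs : 0 ≤ s) (hK : 0 ≤ K)
    (hstep : ∀ (i : Fin n) z, 0 < prefProb P i z →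
      ∑ a, condProb P i z a * exp (-(s * truncSurprisal M (condProb P i z a))) ≤ K) (t : ℝ) :
    ∑ w ∈ univ.filter (fun w => 2 ^ (-t) < P w), P w ≤ exp (s * t) * K ^ n := by
  have hheavy : ∀ w, (2 : ℝ) ^ (-t) < P w →
      ∑ j, truncSurprisal M (condProb P j w (w j)) ≤ t := fun w hw => by
    have hlt := logb_lt_logb one_lt_two (by positivity) hw
    rw [logb_rpow two_pos (by norm_num)] at hlt
    linarith [sum_truncSurprisal_condProb_le hP hPsum ((by positivity : (0 : ℝ) < _).trans hw) M]
  refine (sum_filter_lt_le_exp_mul_sum hP hs hheavy).trans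
    (mul_le_mul_of_nonneg_left ?_ (exp_pos _).le)
  simp only [mul_sum, ← sum_neg_distrib, exp_sum]
  exact sum_mul_prod_le_pow (φ := fun p => exp (-(s * truncSurprisal M p))) hP hPsum
    (fun _ => (exp_pos _).le) hK hstep

end Chaining

lemma chernoff_exponent_le {lam M h x : ℝ} (hM : 0 < M) (hx : 0 ≤ x) :
    lam / (2 * M ^ 2) * ((h - 2 * lam) * x) +
        x * (-(lam / (2 * M ^ 2) * (h - lam / log 2)) + (lam / (2 * M ^ 2)) ^ 2 * M ^ 2 / 2) ≤
      -(lam ^ 2 * x) / (32 * M ^ 2) := by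
  have hlog2 : 16 / 27 < log 2 := by linarith [log_two_gt_d9]
  have hgap : 1 / (2 * log 2) - 27 / 32 ≤ 0 := by
    rw [sub_nonpos, div_le_div_iff₀ (by positivity) (by norm_num)]
    linarith
  have hexpand : lam / (2 * M ^ 2) * ((h - 2 * lam) * x) +
        x * (-(lam / (2 * M ^ 2) * (h - lam / log 2)) + (lam / (2 * M ^ 2)) ^ 2 * M ^ 2 / 2) -
      -(lam ^ 2 * x) / (32 * M ^ 2) = lam ^ 2 * x / M ^ 2 * (1 / (2 * log 2) - 27 / 32) := by
    field_simp
    ring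
  nlinarith [mul_nonpos_of_nonneg_of_nonpos (by positivity : 0 ≤ lam ^ 2 * x / M ^ 2) hgap]

theorem azuma_smooth_min_entropy_general (n : ℕ) (P : (Fin n → Z) → ℝ)
    (hP : ∀ w, 0 ≤ P w) (hPsum : ∑ w, P w = 1) (h : ℝ)
    (hcond : ∀ (i : Fin n) (z : Fin n → Z), 0 < prefProb P i z → h ≤ condEnt P i z)
    (lam : ℝ) (hlam0 : 0 < lam) (hlam : lam < 1/2) :
    ∃ P' : (Fin n → Z) → ℝ, IsSubDist P' ∧
      GTD P' P ≤ Real.exp (-(lam ^ 2 * n) /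
        (32 * (Real.logb 2 ((Fintype.card Z : ℝ) / lam)) ^ 2)) ∧
      ∀ w, P' w ≤ (2 : ℝ) ^ (-((h - 2 * lam) * n)) := by
  set M := logb 2 ((Fintype.card Z : ℝ) / lam)
  have hcard : (1 : ℝ) ≤ Fintype.card Z := Nat.one_le_cast.2 Fintype.card_pos
  have hM : 0 < M := logb_pos one_lt_two ((one_lt_div hlam0).2 (by linarith))
  have hloss : Fintype.card Z * (2 : ℝ) ^ (-M) = lam := by
    rw [rpow_neg zero_le_two, rpow_logb two_pos (by norm_num) (by positivity)]
    field_simp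
  set s := lam / (2 * M ^ 2)
  have hstep : ∀ (i : Fin n) z, 0 < prefProb P i z →
      ∑ a, condProb P i z a * exp (-(s * truncSurprisal M (condProb P i z a))) ≤
        exp (-(s * (h - lam / log 2)) + s ^ 2 * M ^ 2 / 2) := fun i z hz => by
    refine (sum_condProb_mul_exp_neg_mul_truncSurprisal_le hP hz (by positivity) hM.le).trans ?_
    rw [hloss]
    gcongr
    exact hcond i z hz
  refine ⟨cutoff P _, isSubDist_cutoff hP hPsum.le _, ?_, cutoff_le (by positivity)⟩
  calc GTD (cutoff P _) P = ∑ w ∈ univ.filter (fun w => 2 ^ (-((h - 2 * lam) * n)) < P w), P w :=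
        GTD_cutoff hP _
    _ ≤ exp (s * ((h - 2 * lam) * n)) * exp (-(s * (h - lam / log 2)) + s ^ 2 * M ^ 2 / 2) ^ n :=
        sum_filter_lt_le_exp_mul_pow hP hPsum (by positivity) (exp_pos _).le hstep _
    _ = exp (s * ((h - 2 * lam) * n) + n * (-(s * (h - lam / log 2)) + s ^ 2 * M ^ 2 / 2)) := by
        rw [← exp_nat_mul, ← exp_add]
    _ ≤ _ := exp_le_exp.2 (chernoff_exponent_le hM n.cast_nonneg)

theorem azuma_smooth_min_entropy (n : ℕ) (P : (Fin n → Z) → ℝ)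
    (hP : ∀ w, 0 ≤ P w) (hPsum : ∑ w, P w = 1) (h : ℝ) (hh : 0 ≤ h)
    (hcond : ∀ (i : Fin n) (z : Fin n → Z), 0 < prefProb P i z → h ≤ condEnt P i z)
    (lam : ℝ) (hlam0 : 0 < lam) (hlam : lam < 1/2) :
    ∃ P' : (Fin n → Z) → ℝ, IsSubDist P' ∧
      GTD P' P ≤ Real.exp (-(lam ^ 2 * n) /
        (32 * (Real.logb 2 ((Fintype.card Z : ℝ) / lam)) ^ 2)) ∧
      ∀ w, P' w ≤ (2 : ℝ) ^ (-((h - 2 * lam) * n)) :=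
  azuma_smooth_min_entropy_general n P hP hPsum h hcond lam hlam0 hlam
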